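/- arXiv:0906.0555 — 2 statements merged into one kernel-verified Lean document; each statement's English description precedes it below -/
import Mathlib

section
/- (Existence of a low-multiplicity line) Let L be a finite nonempty set of lines in ℝ^n with a nonempty set of joints J. Then there exists a line ℓ ∈ L such that the number of joints of L lying on ℓ is at most K·|J|^(1/n), where K is a constant depending only on n. -/
open MvPolynomial

/-- A line in ℝⁿ, given by a base point and a nonzero direction vector. -/
structure Line (n : ℕ) where
  p : Fin n → ℝ
  v : Fin n → ℝ
  hv : v ≠ 0

/-- The set of points of a line. -/
def Line.carrier {n : ℕ} (ℓ : Line n) : Set (Fin n → ℝ) :=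
  {x | ∃ t : ℝ, x = ℓ.p + t • ℓ.v}

/-- `x` is a joint of the collection of lines `L`: it lies on `n` lines of `L`
whose directions are linearly independent. -/
def IsJoint {n : ℕ} (L : Finset (Line n)) (x : Fin n → ℝ) : Prop :=
  ∃ f : Fin n → Line n, (∀ i, f i ∈ L) ∧ (∀ i, x ∈ (f i).carrier) ∧
    LinearIndependent ℝ (fun i => (f i).v)

/-- The set of joints of `L`. -/
def joints {n : ℕ} (L : Finset (Line n)) : Set (Fin n → ℝ) :=
  {x | IsJoint L x}

/-!
The polynomial method. With `m = ⌊|J| ^ (1/n)⌋` we have `|J| < (m + 1) ^ n`, so counting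
dimensions gives a nonzero polynomial `p` of degree at most `n * m ≤ n * |J| ^ (1/n)` vanishing
on the joints `J`. Some line of `L` then carries at most `deg p` joints: otherwise `p` vanishes
on every line of `L`, having more zeros there than its degree; at a joint its derivatives along
`n` independent directions vanish, so every partial derivative of `p` vanishes on `J`, and a
nonzero one lets us induct on the degree.
-/

namespace MvPolynomial

section RestrictLine

variable {σ R : Type*} [CommSemiring R]

noncomputable def restrictLine (x v : σ → R) : MvPolynomial σ R →ₐ[R] Polynomial R :=
  aeval fun i => Polynomial.C (v i) * Polynomial.X + Polynomial.C (x i)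

variable (x v : σ → R) (p : MvPolynomial σ R)

@[simp]
theorem restrictLine_X (i : σ) :
    restrictLine x v (X i) = Polynomial.C (v i) * Polynomial.X + Polynomial.C (x i) :=
  aeval_X _ i

theorem eval_restrictLine (t : R) : (restrictLine x v p).eval t = eval (x + t • v) p := by
  have h : (Polynomial.aeval t).comp (restrictLine x v) = aeval (x + t • v) :=
    algHom_ext fun i => by simp; ring
  simpa using congr($h p)

theorem natDegree_restrictLine_le : (restrictLine x v p).natDegree ≤ p.totalDegree := by
  rw [restrictLine, aeval_def, eval₂_eq]
  refine Polynomial.natDegree_sum_le_of_forall_le _ _ fun d hd => ?_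
  refine (Polynomial.natDegree_C_mul_le _ _).trans <| (Polynomial.natDegree_prod_le _ _).trans <|
    le_trans ?_ (le_totalDegree hd)
  refine Finset.sum_le_sum fun i _ => Polynomial.natDegree_pow_le.trans ?_
  exact (Nat.mul_le_mul_left (d i) Polynomial.natDegree_linear_le).trans_eq (mul_one _)

theorem coeff_zero_restrictLine : (restrictLine x v p).coeff 0 = eval x p := by
  simp [Polynomial.coeff_zero_eq_eval_zero, eval_restrictLine]

theorem coeff_one_restrictLine [Fintype σ] :
    (restrictLine x v p).coeff 1 = v ⬝ᵥ fun i => eval x (pderiv i p) := by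
  classical
  induction p using MvPolynomial.induction_on with
  | C a => simp
  | add p q hp hq =>
    simp only [map_add, Polynomial.coeff_add, hp, hq, ← dotProduct_add]
    rfl
  | mul_X q i hq =>
    rw [map_mul, restrictLine_X, mul_add, mul_comm (Polynomial.C _), ← mul_assoc]
    simp [coeff_zero_restrictLine, hq, dotProduct, Pi.single_apply, mul_add,
      Finset.sum_add_distrib, Finset.mul_sum, apply_ite (eval x), mul_ite, mul_comm, mul_left_comm,
      add_comm]

theorem eval_pderiv_eq_zero_of_forall_eval_add_smul_eq_zero {K ι : Type*} [Field K] [Infinite K]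
    [Fintype σ] {v : ι → σ → K} (hv : Submodule.span K (Set.range v) = ⊤)
    {p : MvPolynomial σ K} {x : σ → K} (hp : ∀ i (t : K), eval (x + t • v i) p = 0) (j : σ) :
    eval x (pderiv j p) = 0 := by
  classical
  have hdir (i : ι) : v i ⬝ᵥ (fun k => eval x (pderiv k p)) = 0 := by
    have h0 : restrictLine x (v i) p = 0 := Polynomial.funext fun t => by
      simp [eval_restrictLine, hp]
    rw [← coeff_one_restrictLine, h0, Polynomial.coeff_zero]
  have hfun : dotProductEquiv K σ (fun k => eval x (pderiv k p)) = 0 :=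
    LinearMap.ext_on_range hv fun i => by simp [dotProduct_comm, hdir]
  exact congrFun ((dotProductEquiv K σ).map_eq_zero_iff.mp hfun) j

end RestrictLine

section PartialDerivative

variable {σ R : Type*} [CommSemiring R] {p : MvPolynomial σ R}

theorem totalDegree_pderiv_lt (hp : 0 < p.totalDegree) (i : σ) :
    (pderiv i p).totalDegree < p.totalDegree := by
  refine (Finset.sup_lt_iff hp).mpr fun d hd => ?_
  have hcoeff : coeff (d + Finsupp.single i 1) p ≠ 0 := by
    intro h
    exact mem_support_iff.mp hd (by rw [coeff_pderiv, h, zero_mul])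
  have hsum : ((d + Finsupp.single i 1).sum fun _ e => e) = (d.sum fun _ e => e) + 1 := by
    rw [Finsupp.sum_add_index' (fun _ => rfl) (fun _ _ _ => rfl), Finsupp.sum_single_index rfl]
  have := le_totalDegree (mem_support_iff.mpr hcoeff)
  omega

theorem exists_pderiv_ne_zero [NoZeroDivisors R] [CharZero R] (hp : 0 < p.totalDegree) :
    ∃ i, pderiv i p ≠ 0 := by
  obtain ⟨d, hd, hdeg⟩ := Finset.exists_mem_eq_sup p.support
    (support_nonempty.mpr fun h => by simp [h] at hp) fun s : σ →₀ ℕ => s.sum fun _ e => e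
  obtain ⟨i, hi⟩ : ∃ i, d i ≠ 0 := by
    refine DFunLike.ne_iff.mp (show d ≠ 0 from ?_)
    rintro rfl
    simp [totalDegree, hdeg] at hp
  refine ⟨i, fun h => mem_support_iff.mp hd ?_⟩
  have hcoeff := coeff_pderiv (i := i) p (d - Finsupp.single i 1)
  rw [h, coeff_zero, tsub_add_cancel_of_le
    (Finsupp.single_le_iff.mpr (Nat.one_le_iff_ne_zero.mpr hi))] at hcoeff
  exact (mul_eq_zero.mp hcoeff.symm).resolve_right (Nat.cast_add_one_ne_zero _)

end PartialDerivative

theorem exists_ne_zero_totalDegree_le_forall_eval_eq_zero {σ K : Type*} [Fintype σ] [Field K]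
    (S : Finset (σ → K)) {m : ℕ} (hS : S.card < (m + 1) ^ Fintype.card σ) :
    ∃ p : MvPolynomial σ K, p ≠ 0 ∧ p.totalDegree ≤ Fintype.card σ * m ∧ ∀ x ∈ S, eval x p = 0 := by
  classical
  let exponent : (σ → Fin (m + 1)) → σ →₀ ℕ := fun e => Finsupp.equivFunOnFinite.symm (e · : σ → ℕ)
  have hexponent : Function.Injective exponent := by
    intro e e' h
    funext i
    exact Fin.ext (by simpa [exponent] using DFunLike.congr_fun h i)
  let V := Submodule.span K (Set.range fun e => monomial (exponent e) (1 : K))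
  have hV : Module.finrank K V = (m + 1) ^ Fintype.card σ := by
    rw [finrank_span_eq_card, Fintype.card_fun, Fintype.card_fin]
    exact (basisMonomials σ K).linearIndependent.comp exponent hexponent
  have : FiniteDimensional K V := FiniteDimensional.span_of_finite K (Set.finite_range _)
  let evalOnS : MvPolynomial σ K →ₗ[K] S → K := LinearMap.pi fun x => (aeval x.1).toLinearMap
  have hker : LinearMap.ker (evalOnS.domRestrict V) ≠ ⊥ :=
    LinearMap.ker_ne_bot_of_finrank_lt (by simpa [hV] using hS)
  obtain ⟨⟨p, hpV⟩, hp, hp0⟩ := (Submodule.ne_bot_iff _).mp hker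
  refine ⟨p, fun h => hp0 (Subtype.ext h), ?_, fun x hx => congrFun hp ⟨x, hx⟩⟩
  have hle : V ≤ restrictTotalDegree σ K (Fintype.card σ * m) := by
    refine Submodule.span_le.mpr (Set.range_subset_iff.mpr fun e => ?_)
    rw [SetLike.mem_coe, mem_restrictTotalDegree, totalDegree_monomial _ one_ne_zero,
      Finsupp.sum_fintype _ _ fun _ => rfl]
    calc ∑ i, exponent e i = ∑ i, (e i : ℕ) := rfl
      _ ≤ ∑ _i : σ, m := Finset.sum_le_sum fun i _ => Fin.is_le (e i)
      _ = Fintype.card σ * m := by simp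
  exact (mem_restrictTotalDegree _ _ _).mp (hle hpV)

end MvPolynomial

theorem Polynomial.eq_zero_of_natDegree_lt_ncard_of_eval_eq_zero {R : Type*} [CommRing R]
    [IsDomain R] (p : Polynomial R) {s : Set R} (heval : ∀ x ∈ s, p.eval x = 0)
    (hcard : p.natDegree < s.ncard) : p = 0 := by
  have hs : s.Finite := Set.finite_of_ncard_pos (by omega)
  exact p.eq_zero_of_natDegree_lt_card_of_eval_eq_zero' hs.toFinset (by simpa using heval)
    (by rwa [← Set.ncard_eq_toFinset_card _ hs])

theorem lt_floor_rpow_one_div_add_one_pow {x : ℝ} (hx : 0 ≤ x) {n : ℕ} (hn : n ≠ 0) :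
    x < (⌊x ^ ((1 : ℝ) / n)⌋₊ + 1) ^ n :=
  calc x = (x ^ ((1 : ℝ) / n)) ^ n := by rw [one_div, Real.rpow_inv_natCast_pow hx hn]
    _ < _ := pow_lt_pow_left₀ (Nat.lt_floor_add_one _) (by positivity) hn

namespace Line

variable {n : ℕ}

theorem add_smul_mem_carrier {ℓ : Line n} {x : Fin n → ℝ} (hx : x ∈ ℓ.carrier) (t : ℝ) :
    x + t • ℓ.v ∈ ℓ.carrier := by
  obtain ⟨s, rfl⟩ := hx
  exact ⟨s + t, by module⟩

theorem subsingleton_inter_carrier {ℓ₁ ℓ₂ : Line n} (h : LinearIndependent ℝ ![ℓ₁.v, ℓ₂.v]) :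
    (ℓ₁.carrier ∩ ℓ₂.carrier).Subsingleton := by
  rintro x ⟨⟨t₁, rfl⟩, ⟨t₂, hx⟩⟩ y ⟨⟨s₁, rfl⟩, ⟨s₂, hy⟩⟩
  have hcoeffs := LinearIndependent.pair_iff.mp h (t₁ - s₁) (s₂ - t₂)
    (by linear_combination (norm := module) hx - hy)
  rw [sub_eq_zero.mp hcoeffs.1]

theorem eval_eq_zero_of_totalDegree_lt_ncard (ℓ : Line n) {p : MvPolynomial (Fin n) ℝ}
    {A : Set (Fin n → ℝ)} (hA : A ⊆ ℓ.carrier) (hpA : ∀ x ∈ A, eval x p = 0)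
    (hdeg : p.totalDegree < A.ncard) {x : Fin n → ℝ} (hx : x ∈ ℓ.carrier) : eval x p = 0 := by
  let φ : ℝ → Fin n → ℝ := fun t => ℓ.p + t • ℓ.v
  have hφ : φ.Injective := (add_right_injective ℓ.p).comp (smul_left_injective ℝ ℓ.hv)
  have hrestrict : restrictLine ℓ.p ℓ.v p = 0 := by
    refine Polynomial.eq_zero_of_natDegree_lt_ncard_of_eval_eq_zero _ (s := φ ⁻¹' A)
      (fun t ht => by rw [eval_restrictLine]; exact hpA _ ht) ?_
    rw [Set.ncard_preimage_of_injective_subset_range hφ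
      (hA.trans fun y ⟨t, ht⟩ => ⟨t, ht.symm⟩)]
    exact (natDegree_restrictLine_le _ _ _).trans_lt hdeg
  obtain ⟨t, rfl⟩ := hx
  rw [← eval_restrictLine, hrestrict, Polynomial.eval_zero]

end Line

theorem joints_finite {n : ℕ} (hn : 2 ≤ n) (L : Finset (Line n)) : (joints L).Finite := by
  let i₀ : Fin n := ⟨0, by omega⟩
  let i₁ : Fin n := ⟨1, by omega⟩
  refine Set.Finite.subset (s := ⋃ ℓ ∈ L ×ˢ L,
      {x ∈ ℓ.1.carrier ∩ ℓ.2.carrier | LinearIndependent ℝ ![ℓ.1.v, ℓ.2.v]})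
    ((L ×ˢ L).finite_toSet.biUnion fun ℓ _ => Set.Subsingleton.finite
      fun x hx y hy => Line.subsingleton_inter_carrier hx.2 hx.1 hy.1) ?_
  rintro x ⟨f, hfL, hfx, hind⟩
  refine Set.mem_biUnion (x := (f i₀, f i₁)) (by simp [hfL]) ⟨⟨hfx i₀, hfx i₁⟩, ?_⟩
  exact LinearIndependent.pair_iff.mpr <|
    (LinearIndepOn.pair_iff (fun i => (f i).v) (i := i₀) (j := i₁) (by simp [i₀, i₁])).mp
      (hind.linearIndepOn _)

theorem IsJoint.eval_pderiv_eq_zero {n : ℕ} {L : Finset (Line n)} {x : Fin n → ℝ}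
    (hx : IsJoint L x) {p : MvPolynomial (Fin n) ℝ}
    (hp : ∀ ℓ ∈ L, ∀ y ∈ ℓ.carrier, eval y p = 0) (j : Fin n) : eval x (pderiv j p) = 0 := by
  obtain ⟨f, hfL, hfx, hind⟩ := hx
  exact eval_pderiv_eq_zero_of_forall_eval_add_smul_eq_zero
    (hind.span_eq_top_of_card_eq_finrank' (by simp))
    (fun i t => hp _ (hfL i) _ (Line.add_smul_mem_carrier (hfx i) t)) j

theorem exists_ncard_joints_inter_carrier_le_totalDegree {n : ℕ} {L : Finset (Line n)}
    (hJ : (joints L).Nonempty) {p : MvPolynomial (Fin n) ℝ} (hp : p ≠ 0)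
    (hpJ : ∀ x ∈ joints L, eval x p = 0) :
    ∃ ℓ ∈ L, (joints L ∩ ℓ.carrier).ncard ≤ p.totalDegree := by
  induction hd : p.totalDegree using Nat.strong_induction_on generalizing p with
  | _ d ih =>
  by_contra! hrich
  obtain rfl | hpos := Nat.eq_zero_or_pos d
  · obtain ⟨x, hx⟩ := hJ
    have hC := totalDegree_eq_zero_iff_eq_C.mp hd
    have hx0 := hpJ x hx
    rw [hC, eval_C] at hx0
    exact hp (by rw [hC, hx0, C_0])
  · have hline (ℓ) (hℓ : ℓ ∈ L) (y) (hy : y ∈ ℓ.carrier) : eval y p = 0 :=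
      ℓ.eval_eq_zero_of_totalDegree_lt_ncard Set.inter_subset_right (fun x hx => hpJ x hx.1)
        (hd ▸ hrich ℓ hℓ) hy
    obtain ⟨j, hj⟩ := exists_pderiv_ne_zero (hd ▸ hpos)
    have hlt := hd ▸ totalDegree_pderiv_lt (hd ▸ hpos) j
    obtain ⟨ℓ, hℓ, hle⟩ := ih _ hlt hj (fun x hx => IsJoint.eval_pderiv_eq_zero hx hline j) rfl
    exact (hrich ℓ hℓ).not_ge (hle.trans hlt.le)

theorem stmt_8 (n : ℕ) (hn : 2 ≤ n) :
    ∃ K : ℝ, 0 < K ∧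
      ∀ L : Finset (Line n), L.Nonempty → (joints L).Nonempty →
        ∃ ℓ ∈ L, ((joints L ∩ ℓ.carrier).ncard : ℝ) ≤
          K * ((joints L).ncard : ℝ) ^ ((1 : ℝ) / n) := by
  refine ⟨n, by norm_cast; omega, fun L _ hJ => ?_⟩
  have hJfin := joints_finite hn L
  set ρ := ((joints L).ncard : ℝ) ^ ((1 : ℝ) / n)
  obtain ⟨p, hp, hdeg, hpJ⟩ := exists_ne_zero_totalDegree_le_forall_eval_eq_zero hJfin.toFinset
    (m := ⌊ρ⌋₊) <| by
      rw [← Set.ncard_eq_toFinset_card _ hJfin, Fintype.card_fin]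
      exact_mod_cast lt_floor_rpow_one_div_add_one_pow (Nat.cast_nonneg _) (by omega)
  obtain ⟨ℓ, hℓ, hle⟩ := exists_ncard_joints_inter_carrier_le_totalDegree hJ hp
    fun x hx => hpJ x (hJfin.mem_toFinset.mpr hx)
  refine ⟨ℓ, hℓ, ?_⟩
  calc ((joints L ∩ ℓ.carrier).ncard : ℝ) ≤ (n * ⌊ρ⌋₊ : ℕ) := by
        exact_mod_cast hle.trans (by simpa using hdeg)
    _ ≤ n * ρ := by
        push_cast
        gcongr
        exact Nat.floor_le (by positivity)
end

section
/- (Joints for polynomial curves, vanishing lemma) Let 𝓒 be a finite set of smooth curves in ℝ^n, each parametrized by polynomials of degree at most d with nowhere-vanishing derivative, and let J' be a finite set of points each lying on n curves of 𝓒 whose tangent vectors at that point are linearly independent. Suppose every curve of 𝓒 meeting J' contains at least m points of J'. Then every polynomial Q ∈ ℝ[x₁,…,xₙ] of degree < m/d vanishing on J' is the zero polynomial; consequently |J'| ≥ C_n·(m/d)^n for a constant C_n depending only on n. -/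
open MvPolynomial

/-- A polynomially parametrized curve in ℝⁿ. -/
structure PolyCurve (n : ℕ) where
  P : Fin n → Polynomial ℝ

/-- The point of the curve at parameter `t`. -/
def PolyCurve.eval {n : ℕ} (γ : PolyCurve n) (t : ℝ) : Fin n → ℝ :=
  fun i => (γ.P i).eval t

/-- The tangent vector of the curve at parameter `t`. -/
noncomputable def PolyCurve.tangent {n : ℕ} (γ : PolyCurve n) (t : ℝ) : Fin n → ℝ :=
  fun i => (Polynomial.derivative (γ.P i)).eval t

/-- The curve is smooth: its tangent vector never vanishes. -/
def PolyCurve.Smooth {n : ℕ} (γ : PolyCurve n) : Prop :=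
  ∀ t : ℝ, γ.tangent t ≠ 0

/-- All coordinate polynomials have degree at most `d`. -/
def PolyCurve.DegLE {n : ℕ} (γ : PolyCurve n) (d : ℕ) : Prop :=
  ∀ i, (γ.P i).natDegree ≤ d

/-- The set of points of the curve. -/
def PolyCurve.carrier {n : ℕ} (γ : PolyCurve n) : Set (Fin n → ℝ) :=
  {x | ∃ t : ℝ, γ.eval t = x}

/-- `x` is a joint of the collection of curves `𝓒`: there are `n` curves of `𝓒`
passing through `x` whose tangent vectors at `x` are linearly independent. -/
def IsCurveJoint {n : ℕ} (𝓒 : Finset (PolyCurve n)) (x : Fin n → ℝ) : Prop :=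
  ∃ (g : Fin n → PolyCurve n) (τ : Fin n → ℝ),
    (∀ i, g i ∈ 𝓒) ∧ (∀ i, (g i).eval (τ i) = x) ∧
      LinearIndependent ℝ (fun i => (g i).tangent (τ i))

/-!
If `Q` vanishes on the joints and `deg Q * d < m`, then along each curve `γ` meeting the joints,
`Q ∘ γ` is a univariate polynomial of degree `< m` with at least `m` zeros, hence `Q ∘ γ = 0`.
Differentiating, `∇Q(x)` is orthogonal to the tangents of the `n` curves through a joint `x`,
which span `ℝⁿ`; so every `∂ᵢQ` vanishes on the joints too, and induction on the degree
makes `Q` a constant vanishing on a nonempty set. The cardinality bound is dimension counting: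
polynomials with all exponents `≤ E` form a space of dimension `(E + 1)ⁿ` and have degree
`≤ nE`, so fewer than `(E + 1)ⁿ` points are the zeros of a nonzero one.
-/
namespace MvPolynomial

section Semiring

variable {R σ : Type*} [CommSemiring R]

theorem polynomial_eval_aeval (f : σ → Polynomial R) (Q : MvPolynomial σ R) (t : R) :
    (aeval f Q).eval t = eval (fun i => (f i).eval t) Q := by
  simpa [Polynomial.coe_aeval_eq_eval, coe_aeval_eq_eval] using
    comp_aeval_apply (Polynomial.aeval t) Q (f := f)

theorem derivative_aeval [Fintype σ] (f : σ → Polynomial R) (Q : MvPolynomial σ R) :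
    Polynomial.derivative (aeval f Q) =
      ∑ i, aeval f (pderiv i Q) * Polynomial.derivative (f i) := by
  classical
  induction Q using MvPolynomial.induction_on with
  | C a => simp
  | add p q hp hq => simp only [map_add, hp, hq, add_mul, Finset.sum_add_distrib]
  | mul_X p j hp =>
    simp only [map_mul, aeval_X, Polynomial.derivative_mul, hp, Derivation.leibniz, pderiv_X,
      smul_eq_mul, map_add, Pi.single_apply, mul_one, mul_zero, apply_ite, map_zero, ite_mul,
      zero_mul, add_mul, Finset.sum_add_distrib, Finset.sum_ite_eq, Finset.mem_univ, if_true,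
      Finset.sum_mul]
    rw [add_comm]
    exact congrArg₂ _ rfl (Finset.sum_congr rfl fun _ _ => by ring)

theorem totalDegree_pderiv_lt_s15 {i : σ} {Q : MvPolynomial σ R} (h : pderiv i Q ≠ 0) :
    (pderiv i Q).totalDegree < Q.totalDegree := by
  have hlt : ∀ u ∈ (pderiv i Q).support, (u.sum fun _ e => e) < Q.totalDegree := by
    intro u hu
    rw [mem_support_iff, coeff_pderiv] at hu
    have := le_totalDegree (mem_support_iff.mpr (left_ne_zero_of_mul hu))
    rwa [Finsupp.sum_add_index' (fun _ => rfl) (fun _ _ _ => rfl),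
      Finsupp.sum_single_index rfl] at this
  obtain ⟨u, hu⟩ := support_nonempty.mpr h
  exact (Finset.sup_lt_iff ((Nat.zero_le _).trans_lt (hlt u hu))).mpr hlt

theorem totalDegree_le_of_mem_restrictDegree [Fintype σ] {E : ℕ} {Q : MvPolynomial σ R}
    (hQ : Q ∈ restrictDegree σ R E) : Q.totalDegree ≤ Fintype.card σ * E := by
  refine Finset.sup_le fun s hs => ?_
  calc (s.sum fun _ e => e) = ∑ i ∈ s.support, s i := rfl
    _ ≤ ∑ i, s i := Finset.sum_le_univ_sum_of_nonneg fun _ => Nat.zero_le _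
    _ ≤ Finset.univ.card • E :=
      Finset.sum_le_card_nsmul _ _ E fun i _ => (mem_restrictDegree _ _ _).mp hQ s hs i
    _ = Fintype.card σ * E := by simp

end Semiring

theorem eq_C_of_forall_pderiv_eq_zero {R σ : Type*} [CommSemiring R] [NoZeroDivisors R]
    [CharZero R] {Q : MvPolynomial σ R} (h : ∀ i, pderiv i Q = 0) : Q = C (coeff 0 Q) := by
  classical
  ext s
  rw [coeff_C]
  split_ifs with hs
  · rw [hs]
  obtain ⟨i, hi⟩ : ∃ i, s i ≠ 0 := by simpa [Finsupp.ext_iff] using Ne.symm hs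
  have hcoeff := coeff_pderiv (i := i) Q (s - Finsupp.single i 1)
  rw [h i, coeff_zero, tsub_add_cancel_of_le (Finsupp.single_le_iff.mpr
    (Nat.one_le_iff_ne_zero.mpr hi))] at hcoeff
  exact (mul_eq_zero.mp hcoeff.symm).resolve_right (Nat.cast_add_one_ne_zero _)

section Field

variable {K σ : Type*} [Field K] [Fintype σ]

theorem finrank_restrictDegree (E : ℕ) :
    Module.finrank K (restrictDegree σ K E) = (E + 1) ^ Fintype.card σ := by
  classical
  let e : {s : σ →₀ ℕ | ∀ i, s i ≤ E} ≃ (σ → Fin (E + 1)) :=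
    { toFun := fun s i => ⟨s.1 i, Nat.lt_succ_of_le (s.2 i)⟩
      invFun := fun g => ⟨Finsupp.equivFunOnFinite.symm fun i => (g i : ℕ), fun i => by
        simpa using Nat.le_of_lt_succ (g i).2⟩
      left_inv := fun s => Subtype.ext (Finsupp.ext fun i => by simp)
      right_inv := fun g => by ext; simp }
  rw [restrictDegree, Module.finrank_eq_card_basis ((basisRestrictSupport K _).reindex e)]
  simp

theorem exists_ne_zero_totalDegree_le_of_card_lt {S : Finset (σ → K)} {E : ℕ}
    (hS : S.card < (E + 1) ^ Fintype.card σ) :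
    ∃ Q : MvPolynomial σ K, Q ≠ 0 ∧ Q.totalDegree ≤ Fintype.card σ * E ∧
      ∀ x ∈ S, eval x Q = 0 := by
  let evalOn : restrictDegree σ K E →ₗ[K] S → K :=
    LinearMap.pi fun x => (aeval (x : σ → K)).toLinearMap ∘ₗ (restrictDegree σ K E).subtype
  have hker : LinearMap.ker evalOn ≠ ⊥ := LinearMap.ker_ne_bot_of_finrank_lt <| by
    rwa [finrank_restrictDegree, Module.finrank_fintype_fun_eq_card, Fintype.card_coe]
  obtain ⟨Q, hQ, hQ0⟩ := Submodule.exists_mem_ne_zero_of_ne_bot hker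
  refine ⟨Q, fun h => hQ0 (Subtype.ext h), totalDegree_le_of_mem_restrictDegree Q.2,
    fun x hx => ?_⟩
  simpa [evalOn, coe_aeval_eq_eval] using congrFun (LinearMap.mem_ker.mp hQ) ⟨x, hx⟩

theorem div_card_pow_le_card_of_forall_eq_zero {S : Finset (σ → K)} (hS : S.Nonempty) {D : ℕ}
    (h : ∀ Q : MvPolynomial σ K, Q.totalDegree < D → (∀ x ∈ S, eval x Q = 0) → Q = 0) :
    ((D : ℝ) / Fintype.card σ) ^ Fintype.card σ ≤ S.card := by
  set N := Fintype.card σ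
  obtain _ | D := D
  · calc ((0 : ℕ) / N : ℝ) ^ N ≤ 1 := by simp [pow_le_one₀]
      _ ≤ S.card := mod_cast hS.card_pos
  have hcard : (D / N + 1) ^ N ≤ S.card := by
    by_contra! hlt
    obtain ⟨Q, hQ0, hQdeg, hQS⟩ := exists_ne_zero_totalDegree_le_of_card_lt hlt
    exact hQ0 (h Q (Nat.lt_succ_of_le (hQdeg.trans (Nat.mul_div_le D N))) hQS)
  rcases Nat.eq_zero_or_pos N with hN | hN
  · simp [hN, hS]
  calc (((D + 1 : ℕ) : ℝ) / N) ^ N ≤ ((D / N + 1 : ℕ) : ℝ) ^ N := by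
        gcongr
        rw [div_le_iff₀ (by positivity)]
        exact_mod_cast (Nat.lt_mul_div_succ D hN).trans_eq (mul_comm _ _)
    _ ≤ S.card := mod_cast hcard

end Field

end MvPolynomial

theorem Matrix.eq_zero_of_linearIndependent_of_dotProduct_eq_zero {ι K : Type*} [Fintype ι]
    [DecidableEq ι] [Field K] {v : ι → ι → K} (hv : LinearIndependent K v) {w : ι → K}
    (hw : ∀ j, v j ⬝ᵥ w = 0) : w = 0 := by
  have hinj : Function.Injective (Matrix.of v).mulVec :=
    Matrix.mulVec_injective_iff_isUnit.mpr (Matrix.linearIndependent_rows_iff_isUnit.mp hv)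
  exact hinj (by ext j; simpa [Matrix.mulVec] using hw j)

namespace PolyCurve

variable {n : ℕ}

theorem eval_aeval (γ : PolyCurve n) (Q : MvPolynomial (Fin n) ℝ) (t : ℝ) :
    (aeval γ.P Q).eval t = MvPolynomial.eval (γ.eval t) Q :=
  polynomial_eval_aeval γ.P Q t

theorem aeval_eq_zero_of_totalDegree_mul_lt_ncard {γ : PolyCurve n} {d : ℕ} (hγ : γ.DegLE d)
    {A : Set (Fin n → ℝ)} (hAγ : A ⊆ γ.carrier) {Q : MvPolynomial (Fin n) ℝ}
    (hQ : ∀ x ∈ A, MvPolynomial.eval x Q = 0) (hdeg : Q.totalDegree * d < A.ncard) :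
    aeval γ.P Q = 0 := by
  have : Fintype A := (Set.finite_of_ncard_pos (Nat.zero_lt_of_lt hdeg)).fintype
  choose τ hτ using fun x : A => hAγ x.2
  refine Polynomial.eq_zero_of_natDegree_lt_card_of_eval_eq_zero _
    (f := τ) (fun x y hxy => Subtype.ext (by rw [← hτ x, ← hτ y, hxy])) (fun x => ?_) ?_
  · rw [eval_aeval, hτ x]
    exact hQ x x.2
  · rw [← Nat.card_eq_fintype_card, Nat.card_coe_set_eq]
    exact (aeval_natDegree_le Q le_rfl γ.P hγ).trans_lt hdeg

theorem gradient_dotProduct_tangent_eq_zero {γ : PolyCurve n} {Q : MvPolynomial (Fin n) ℝ}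
    (hQ : aeval γ.P Q = 0) (t : ℝ) :
    γ.tangent t ⬝ᵥ (fun i => MvPolynomial.eval (γ.eval t) (pderiv i Q)) = 0 := by
  have := congrArg (Polynomial.eval t) (derivative_aeval γ.P Q)
  simp only [hQ, map_zero, Polynomial.eval_zero, Polynomial.eval_finsetSum,
    Polynomial.eval_mul, eval_aeval] at this
  simpa [dotProduct, tangent, mul_comm] using this.symm

end PolyCurve

theorem IsCurveJoint.eval_pderiv_eq_zero {n : ℕ} {𝓒 : Finset (PolyCurve n)} {x : Fin n → ℝ}
    (hx : IsCurveJoint 𝓒 x) {Q : MvPolynomial (Fin n) ℝ}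
    (hQ : ∀ γ ∈ 𝓒, x ∈ γ.carrier → aeval γ.P Q = 0) (i : Fin n) : eval x (pderiv i Q) = 0 := by
  obtain ⟨g, τ, hg𝓒, hgx, hli⟩ := hx
  refine congrFun (Matrix.eq_zero_of_linearIndependent_of_dotProduct_eq_zero hli
    (w := fun i => eval x (pderiv i Q)) fun j => ?_) i
  simpa [hgx j] using
    PolyCurve.gradient_dotProduct_tangent_eq_zero (hQ _ (hg𝓒 j) ⟨τ j, hgx j⟩) (τ j)

theorem eq_zero_of_eval_eq_zero_on_joints {n d m : ℕ} {𝓒 : Finset (PolyCurve n)}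
    {J : Finset (Fin n → ℝ)} (h𝓒 : ∀ γ ∈ 𝓒, γ.DegLE d) (hJ : J.Nonempty)
    (hjoint : ∀ x ∈ J, IsCurveJoint 𝓒 x)
    (hm : ∀ γ ∈ 𝓒, ((J : Set (Fin n → ℝ)) ∩ γ.carrier).Nonempty →
      m ≤ ((J : Set (Fin n → ℝ)) ∩ γ.carrier).ncard)
    {Q : MvPolynomial (Fin n) ℝ} (hQ : Q.totalDegree * d < m) (hQJ : ∀ x ∈ J, eval x Q = 0) :
    Q = 0 := by
  induction hk : Q.totalDegree using Nat.strong_induction_on generalizing Q with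
  | _ k ih =>
  have hcurve : ∀ x ∈ J, ∀ γ ∈ 𝓒, x ∈ γ.carrier → aeval γ.P Q = 0 := fun x hx γ hγ hxγ =>
    PolyCurve.aeval_eq_zero_of_totalDegree_mul_lt_ncard (h𝓒 γ hγ) Set.inter_subset_right
      (fun y hy => hQJ y hy.1) (hQ.trans_le (hm γ hγ ⟨x, hx, hxγ⟩))
  have hpderiv : ∀ i, pderiv i Q = 0 := by
    intro i
    by_contra hi
    have hlt := totalDegree_pderiv_lt_s15 hi
    exact hi (ih _ (hk ▸ hlt) ((Nat.mul_le_mul_right d hlt.le).trans_lt hQ)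
      (fun x hx => (hjoint x hx).eval_pderiv_eq_zero (hcurve x hx) i) rfl)
  obtain ⟨x, hx⟩ := hJ
  rw [eq_C_of_forall_pderiv_eq_zero hpderiv] at hQJ ⊢
  rw [← eval_C (f := x) (coeff 0 Q), hQJ x hx, C_0]

theorem stmt_15_general (n : ℕ) :
    ∃ C : ℝ, 0 < C ∧
      ∀ (d : ℕ) (𝓒 : Finset (PolyCurve n)) (J' : Finset (Fin n → ℝ)) (m : ℕ),
        (∀ γ ∈ 𝓒, γ.Smooth ∧ γ.DegLE d) →
        J'.Nonempty →
        (∀ x ∈ J', IsCurveJoint 𝓒 x) →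
        (∀ γ ∈ 𝓒, ((J' : Set (Fin n → ℝ)) ∩ γ.carrier).Nonempty →
          m ≤ ((J' : Set (Fin n → ℝ)) ∩ γ.carrier).ncard) →
        (∀ Q : MvPolynomial (Fin n) ℝ, (Q.totalDegree : ℝ) < (m : ℝ) / d →
          (∀ x ∈ J', MvPolynomial.eval x Q = 0) → Q = 0) ∧
        C * ((m : ℝ) / d) ^ n ≤ (J'.card : ℝ) := by
  refine ⟨((n : ℝ) ^ n)⁻¹, inv_pos.mpr (mod_cast Nat.pow_self_pos),
    fun d 𝓒 J' m h𝓒 hJ' hjoint hm => ?_⟩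
  have hvanish : ∀ Q : MvPolynomial (Fin n) ℝ, (Q.totalDegree : ℝ) < (m : ℝ) / d →
      (∀ x ∈ J', eval x Q = 0) → Q = 0 := by
    intro Q hQ hQJ
    have hd : 0 < d :=
      Nat.pos_of_ne_zero fun hd => (Nat.cast_nonneg _).not_gt (by simpa [hd] using hQ)
    refine eq_zero_of_eval_eq_zero_on_joints (fun γ hγ => (h𝓒 γ hγ).2) hJ' hjoint hm ?_ hQJ
    exact_mod_cast (lt_div_iff₀ (by positivity)).mp hQ
  refine ⟨hvanish, ?_⟩
  calc ((n : ℝ) ^ n)⁻¹ * ((m : ℝ) / d) ^ n = ((m : ℝ) / d / n) ^ n := by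
        rw [div_pow _ (n : ℝ), inv_mul_eq_div]
    _ ≤ ((⌈(m : ℝ) / d⌉₊ : ℝ) / n) ^ n := by gcongr; exact Nat.le_ceil _
    _ ≤ J'.card := by
        simpa using div_card_pow_le_card_of_forall_eq_zero hJ'
          fun Q hQ => hvanish Q (Nat.lt_ceil.mp hQ)

theorem stmt_15 (n : ℕ) (hn : 2 ≤ n) :
    ∃ C : ℝ, 0 < C ∧
      ∀ (d : ℕ) (𝓒 : Finset (PolyCurve n)) (J' : Finset (Fin n → ℝ)) (m : ℕ),
        (∀ γ ∈ 𝓒, γ.Smooth ∧ γ.DegLE d) →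
        J'.Nonempty →
        (∀ x ∈ J', IsCurveJoint 𝓒 x) →
        (∀ γ ∈ 𝓒, ((J' : Set (Fin n → ℝ)) ∩ γ.carrier).Nonempty →
          m ≤ ((J' : Set (Fin n → ℝ)) ∩ γ.carrier).ncard) →
        (∀ Q : MvPolynomial (Fin n) ℝ, (Q.totalDegree : ℝ) < (m : ℝ) / d →
          (∀ x ∈ J', MvPolynomial.eval x Q = 0) → Q = 0) ∧
        C * ((m : ℝ) / d) ^ n ≤ (J'.card : ℝ) :=
  stmt_15_general n
end
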